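/- arXiv:1303.5845 — 3 statements merged into one kernel-verified Lean document; each statement's English description precedes it below -/
import Mathlib

section
/- Let γ > 0 and let l be a positive integer with 2l > γ + m. Then there exists a constant C > 0, depending only on m (i.e., on a and b), γ and l, such that for every integer μ ≥ 2 one has ∫_0^π (1/k_{μ,l}) D_{μ,l}(t) t^γ α(t) dt ≤ C / μ^γ. -/
open MeasureTheory Real Set

/-!
Split `(0, π)` at `1/μ`. The kernel `D_{μ,l}` is at most `μ^(2l)` everywhere and, by Jordan's
inequality `sin (t/2) ≥ t/π`, at most `(π/t)^(2l)`; together with `α t ≤ t^(a+b)` this bounds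
the numerator by `∫₀^(1/μ) μ^(2l) t^(γ+m-1) + ∫_(1/μ)^∞ π^(2l) t^(γ+m-1-2l)`, which is of
order `μ^(2l-γ-m)` because `2l > γ + m` makes the tail converge. On `(0, 1/μ)` Jordan's
inequality also gives `D_{μ,l} ≥ (2μ/π)^(2l)` and `α t ≥ (t/π)^(a+b)`, so `k_{μ,l}` is at least
of order `μ^(2l-m)`.
-/

noncomputable def jacksonKernel (μ l : ℕ) (t : ℝ) : ℝ :=
  (sin (μ * t / 2) / sin (t / 2)) ^ (2 * l)

noncomputable def jacobiWeight (a b : ℕ) (t : ℝ) : ℝ :=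
  sin (t / 2) ^ a * sin t ^ b

lemma abs_sin_nat_mul_le (n : ℕ) (x : ℝ) : |sin (n * x)| ≤ n * |sin x| := by
  induction n with
  | zero => simp
  | succ k ih =>
    calc |sin ((k + 1 : ℕ) * x)| = |sin (k * x) * cos x + cos (k * x) * sin x| := by
          rw [← sin_add]; push_cast; ring_nf
      _ ≤ |sin (k * x)| * |cos x| + |cos (k * x)| * |sin x| := by
          rw [← abs_mul, ← abs_mul]; exact abs_add_le _ _
      _ ≤ k * |sin x| * 1 + 1 * |sin x| := by
          gcongr
          exacts [abs_cos_le_one x, abs_cos_le_one _]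
      _ = (k + 1 : ℕ) * |sin x| := by push_cast; ring

lemma abs_sin_nat_mul_div_sin_le (n : ℕ) (x : ℝ) : |sin (n * x) / sin x| ≤ n := by
  rcases eq_or_ne (sin x) 0 with h | h
  · simp [h]
  · rw [abs_div, div_le_iff₀ (abs_pos.2 h)]
    exact abs_sin_nat_mul_le n x

lemma div_pi_le_sin_half {t : ℝ} (h0 : 0 ≤ t) (hπ : t ≤ π) : t / π ≤ sin (t / 2) :=
  calc t / π = 2 / π * (t / 2) := by ring
    _ ≤ sin (t / 2) := mul_le_sin (by linarith) (by linarith)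

section jacksonKernel

variable {μ l : ℕ} {t : ℝ}

lemma jacksonKernel_nonneg : 0 ≤ jacksonKernel μ l t :=
  (even_two_mul l).pow_nonneg _

lemma jacksonKernel_le : jacksonKernel μ l t ≤ (μ : ℝ) ^ (2 * l) := by
  rw [jacksonKernel, ← (even_two_mul l).pow_abs]
  gcongr
  simpa only [mul_div_assoc] using abs_sin_nat_mul_div_sin_le μ (t / 2)

lemma jacksonKernel_le_div_pow (ht : 0 < t) (htπ : t ≤ π) :
    jacksonKernel μ l t ≤ (π / t) ^ (2 * l) := by
  have hsin : t / π ≤ sin (t / 2) := div_pi_le_sin_half ht.le htπ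
  have hsin_pos : 0 < sin (t / 2) := (by positivity : 0 < t / π).trans_le hsin
  rw [jacksonKernel, ← (even_two_mul l).pow_abs]
  gcongr
  calc |sin (μ * t / 2) / sin (t / 2)| = |sin (μ * t / 2)| / sin (t / 2) := by
        rw [abs_div, abs_of_pos hsin_pos]
    _ ≤ 1 / (t / π) := div_le_div₀ zero_le_one (abs_sin_le_one _) (by positivity) hsin
    _ = π / t := one_div_div t π

lemma two_mul_div_pi_pow_le_jacksonKernel (ht : 0 < t) (htπ : t ≤ π) (hμt : μ * t ≤ π) :
    (2 * μ / π) ^ (2 * l) ≤ jacksonKernel μ l t := by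
  have hnum : μ * t / π ≤ sin (μ * t / 2) := div_pi_le_sin_half (by positivity) hμt
  have hden : sin (t / 2) ≤ t / 2 := sin_le (by linarith)
  have hden_pos : 0 < sin (t / 2) := sin_pos_of_pos_of_lt_pi (by linarith) (by linarith)
  rw [jacksonKernel]
  refine pow_le_pow_left₀ (by positivity) ?_ _
  calc 2 * μ / π = (μ * t / π) / (t / 2) := by field_simp
    _ ≤ sin (μ * t / 2) / sin (t / 2) :=
        div_le_div₀ ((by positivity : (0 : ℝ) ≤ μ * t / π).trans hnum) hnum hden_pos hden

end jacksonKernel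

section jacobiWeight

variable {a b : ℕ} {t : ℝ}

lemma abs_jacobiWeight_le_one : |jacobiWeight a b t| ≤ 1 := by
  rw [jacobiWeight, abs_mul, abs_pow, abs_pow]
  exact mul_le_one₀ (pow_le_one₀ (abs_nonneg _) (abs_sin_le_one _)) (by positivity)
    (pow_le_one₀ (abs_nonneg _) (abs_sin_le_one _))

lemma jacobiWeight_nonneg (h0 : 0 ≤ t) (hπ : t ≤ π) : 0 ≤ jacobiWeight a b t := by
  have := sin_nonneg_of_nonneg_of_le_pi h0 hπ
  have := sin_nonneg_of_nonneg_of_le_pi (x := t / 2) (by linarith) (by linarith)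
  unfold jacobiWeight
  positivity

lemma jacobiWeight_le_pow (h0 : 0 ≤ t) : jacobiWeight a b t ≤ t ^ (a + b) := by
  have hsin_le : ∀ {x}, 0 ≤ x → x ≤ t → |sin x| ≤ t := fun hx hxt =>
    abs_sin_le_abs.trans ((abs_of_nonneg hx).trans_le hxt)
  calc jacobiWeight a b t ≤ |sin (t / 2)| ^ a * |sin t| ^ b := by
        rw [← abs_pow, ← abs_pow, ← abs_mul]; exact le_abs_self _
    _ ≤ t ^ a * t ^ b := by
        gcongr
        exacts [hsin_le (by linarith) (by linarith), hsin_le h0 le_rfl]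
    _ = t ^ (a + b) := (pow_add t a b).symm

lemma div_pi_pow_le_jacobiWeight (h0 : 0 ≤ t) (h : t ≤ π / 2) :
    (t / π) ^ (a + b) ≤ jacobiWeight a b t := by
  have h1 : t / π ≤ sin (t / 2) := div_pi_le_sin_half h0 (by linarith [pi_pos])
  have h2 : t / π ≤ sin t :=
    calc t / π ≤ 2 * t / π := by gcongr; linarith
      _ = 2 / π * t := by ring
      _ ≤ sin t := mul_le_sin h0 h
  have hπ : 0 ≤ t / π := by positivity
  rw [pow_add, jacobiWeight]
  exact mul_le_mul (pow_le_pow_left₀ hπ h1 a) (pow_le_pow_left₀ hπ h2 b) (by positivity)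
    (pow_nonneg (hπ.trans h1) a)

end jacobiWeight

lemma setIntegral_Ioo_zero_le_of_le_rpow {g : ℝ → ℝ} {A B c d r T : ℝ}
    (hr : 0 < r) (hrT : r < T) (hc : -1 < c) (hd : d < -1) (hB : 0 ≤ B)
    (hg : AEStronglyMeasurable g (volume.restrict (Ioo 0 T)))
    (hg0 : ∀ t ∈ Ioo 0 T, 0 ≤ g t)
    (hgA : ∀ t ∈ Ioo 0 T, g t ≤ A * t ^ c) (hgB : ∀ t ∈ Ioo 0 T, g t ≤ B * t ^ d) :
    ∫ t in Ioo 0 T, g t ≤ A * (r ^ (c + 1) / (c + 1)) + B * (r ^ (d + 1) / -(d + 1)) := by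
  have hsub₁ : Ioc 0 r ⊆ Ioo 0 T := Ioc_subset_Ioo_right hrT
  have hsub₂ : Ioo r T ⊆ Ioo 0 T := Ioo_subset_Ioo_left hr.le
  have hA_int : IntegrableOn (fun t => A * t ^ c) (Ioc 0 r) :=
    (intervalIntegral.intervalIntegrable_rpow' hc).1.const_mul A
  have hB_int : IntegrableOn (fun t => B * t ^ d) (Ioi r) :=
    (integrableOn_Ioi_rpow_of_lt hd hr).const_mul B
  have hg₁ : IntegrableOn g (Ioc 0 r) := by
    refine hA_int.mono' (hg.mono_set hsub₁) ?_
    filter_upwards [ae_restrict_mem measurableSet_Ioc] with t ht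
    rw [norm_of_nonneg (hg0 t (hsub₁ ht))]
    exact hgA t (hsub₁ ht)
  have hg₂ : IntegrableOn g (Ioo r T) := by
    refine (hB_int.mono_set Ioo_subset_Ioi_self).mono' (hg.mono_set hsub₂) ?_
    filter_upwards [ae_restrict_mem measurableSet_Ioo] with t ht
    rw [norm_of_nonneg (hg0 t (hsub₂ ht))]
    exact hgB t (hsub₂ ht)
  have hdisj : Disjoint (Ioc 0 r) (Ioo r T) :=
    disjoint_left.2 fun t h₁ h₂ => h₂.1.not_ge h₁.2
  rw [← Ioc_union_Ioo_eq_Ioo hr.le hrT, setIntegral_union hdisj measurableSet_Ioo hg₁ hg₂]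
  gcongr
  · calc ∫ t in Ioc 0 r, g t ≤ ∫ t in Ioc 0 r, A * t ^ c :=
          setIntegral_mono_on hg₁ hA_int measurableSet_Ioc fun t ht => hgA t (hsub₁ ht)
      _ = A * (r ^ (c + 1) / (c + 1)) := by
          rw [integral_const_mul, ← intervalIntegral.integral_of_le hr.le,
            integral_rpow (Or.inl hc), zero_rpow (by linarith), sub_zero]
  · calc ∫ t in Ioo r T, g t ≤ ∫ t in Ioo r T, B * t ^ d :=
          setIntegral_mono_on hg₂ (hB_int.mono_set Ioo_subset_Ioi_self) measurableSet_Ioo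
            fun t ht => hgB t (hsub₂ ht)
      _ ≤ ∫ t in Ioi r, B * t ^ d := by
          refine setIntegral_mono_set hB_int ?_ Ioo_subset_Ioi_self.eventuallyLE
          filter_upwards [ae_restrict_mem measurableSet_Ioi] with t ht
          exact mul_nonneg hB (rpow_nonneg (hr.trans ht).le d)
      _ = B * (r ^ (d + 1) / -(d + 1)) := by
          rw [integral_const_mul, integral_Ioi_rpow_of_lt hd hr, neg_div, div_neg]

lemma setIntegral_jacksonKernel_mul_rpow_mul_jacobiWeight_le {μ l a b : ℕ} {γ : ℝ}
    (hμ : 1 ≤ μ) (he : 0 < γ + (a + b + 1)) (h2l : γ + (a + b + 1) < 2 * l) :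
    ∫ t in Ioo 0 π, jacksonKernel μ l t * (t ^ γ * jacobiWeight a b t) ≤
      (1 / (γ + (a + b + 1)) + π ^ (2 * l) / (2 * l - (γ + (a + b + 1)))) *
        ((μ : ℝ) ^ (2 * l) / (μ : ℝ) ^ (γ + (a + b + 1))) := by
  set e := γ + (a + b + 1) with he_def
  clear_value e
  have hμ0 : (0 : ℝ) < μ := by exact_mod_cast hμ
  have hrπ : (μ : ℝ)⁻¹ < π :=
    (inv_le_one_of_one_le₀ (by exact_mod_cast hμ)).trans_lt (by linarith [pi_gt_three])
  have hweight_nonneg : ∀ t ∈ Ioo 0 π, 0 ≤ t ^ γ * jacobiWeight a b t := fun t ht =>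
    mul_nonneg (rpow_nonneg ht.1.le γ) (jacobiWeight_nonneg ht.1.le ht.2.le)
  have hweight : ∀ t ∈ Ioo 0 π, t ^ γ * jacobiWeight a b t ≤ t ^ (e - 1) := fun t ht => by
    calc t ^ γ * jacobiWeight a b t ≤ t ^ γ * t ^ (a + b) :=
          mul_le_mul_of_nonneg_left (jacobiWeight_le_pow ht.1.le) (rpow_nonneg ht.1.le γ)
      _ = t ^ (e - 1) := by
          rw [← rpow_natCast, ← rpow_add ht.1]
          congr 1
          rw [he_def]; push_cast
          ring
  refine (setIntegral_Ioo_zero_le_of_le_rpow (A := (μ : ℝ) ^ (2 * l)) (B := π ^ (2 * l))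
    (c := e - 1) (d := e - 1 - 2 * l) (by positivity) hrπ (by linarith) (by linarith)
    (by positivity) ?_ ?_ ?_ ?_).trans_eq ?_
  · exact (by unfold jacksonKernel jacobiWeight; fun_prop : Measurable _).aestronglyMeasurable
  · exact fun t ht => mul_nonneg jacksonKernel_nonneg (hweight_nonneg t ht)
  · exact fun t ht => mul_le_mul jacksonKernel_le (hweight t ht) (hweight_nonneg t ht)
      (by positivity)
  · intro t ht
    calc jacksonKernel μ l t * (t ^ γ * jacobiWeight a b t)
        ≤ (π / t) ^ (2 * l) * t ^ (e - 1) :=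
          mul_le_mul (jacksonKernel_le_div_pow ht.1 ht.2.le) (hweight t ht)
            (hweight_nonneg t ht) (by have := ht.1; positivity)
      _ = π ^ (2 * l) * t ^ (e - 1 - 2 * l) := by
          rw [div_pow, rpow_sub ht.1 (e - 1),
            show (2 * l : ℝ) = ((2 * l : ℕ) : ℝ) by push_cast; ring, rpow_natCast]
          field_simp
  · have h₁ : (μ : ℝ)⁻¹ ^ (e - 1 + 1) = 1 / (μ : ℝ) ^ e := by
      rw [sub_add_cancel, inv_rpow hμ0.le, one_div]
    have h₂ : (μ : ℝ)⁻¹ ^ (e - 1 - 2 * l + 1) = (μ : ℝ) ^ (2 * l) / (μ : ℝ) ^ e := by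
      rw [show e - 1 - 2 * l + 1 = e - (2 * l : ℕ) by push_cast; ring, inv_rpow hμ0.le,
        rpow_sub hμ0, rpow_natCast, inv_div]
    have : e ≠ 0 := he.ne'
    have : 2 * (l : ℝ) - e ≠ 0 := by linarith
    rw [h₁, h₂, sub_add_cancel, show -(e - 1 - 2 * l + 1) = 2 * (l : ℝ) - e by ring]
    field_simp

lemma le_setIntegral_jacksonKernel_mul_jacobiWeight {μ l a b : ℕ} (hμ : 1 ≤ μ) :
    (2 / π) ^ (2 * l) / (π ^ (a + b) * (a + b + 1)) *
        ((μ : ℝ) ^ (2 * l) / (μ : ℝ) ^ (a + b + 1)) ≤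
      ∫ t in Ioo 0 π, jacksonKernel μ l t * jacobiWeight a b t := by
  have hμ0 : (0 : ℝ) < μ := by exact_mod_cast hμ
  set r := (μ : ℝ)⁻¹
  have hr1 : r ≤ 1 := inv_le_one_of_one_le₀ (by exact_mod_cast hμ)
  have hsub : Ioc 0 r ⊆ Ioo 0 π := Ioc_subset_Ioo_right (by linarith [pi_gt_three])
  have hint : IntegrableOn (fun t => jacksonKernel μ l t * jacobiWeight a b t) (Ioo 0 π) := by
    refine Measure.integrableOn_of_bounded (M := (μ : ℝ) ^ (2 * l)) (by simp)
      (by unfold jacksonKernel jacobiWeight; fun_prop : Measurable _).aestronglyMeasurable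
      (ae_of_all _ fun t => ?_)
    rw [norm_mul, norm_of_nonneg jacksonKernel_nonneg, Real.norm_eq_abs]
    exact (mul_le_of_le_one_right jacksonKernel_nonneg abs_jacobiWeight_le_one).trans
      jacksonKernel_le
  calc _ = ∫ t in Ioc 0 r, (2 * μ / π) ^ (2 * l) / π ^ (a + b) * t ^ (a + b) := by
          rw [integral_const_mul, ← intervalIntegral.integral_of_le (by positivity), integral_pow,
            zero_pow (by omega), sub_zero, inv_pow]
          push_cast
          field_simp
          rw [← mul_pow]
          ring
    _ ≤ ∫ t in Ioc 0 r, jacksonKernel μ l t * jacobiWeight a b t := by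
          refine setIntegral_mono_on (by fun_prop : Continuous _).integrableOn_Ioc
            (hint.mono_set hsub) measurableSet_Ioc fun t ht => ?_
          have hμt : μ * t ≤ 1 := by
            calc μ * t ≤ μ * r := by gcongr; exact ht.2
              _ = 1 := mul_inv_cancel₀ hμ0.ne'
          rw [show (2 * μ / π) ^ (2 * l) / π ^ (a + b) * t ^ (a + b) =
              (2 * μ / π) ^ (2 * l) * (t / π) ^ (a + b) by ring]
          exact mul_le_mul
            (two_mul_div_pi_pow_le_jacksonKernel ht.1 (by linarith [pi_gt_three, ht.2])
              (by linarith [pi_gt_three]))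
            (div_pi_pow_le_jacobiWeight ht.1.le (by linarith [pi_gt_three, ht.2]))
            (by have := ht.1; positivity) jacksonKernel_nonneg
    _ ≤ ∫ t in Ioo 0 π, jacksonKernel μ l t * jacobiWeight a b t := by
          refine setIntegral_mono_set hint ?_ hsub.eventuallyLE
          filter_upwards [ae_restrict_mem measurableSet_Ioo] with t ht
          exact mul_nonneg jacksonKernel_nonneg (jacobiWeight_nonneg ht.1.le ht.2.le)

theorem stmt_0_general (a b : ℕ) (m : ℕ) (hm : m = a + b + 1)
    (γ : ℝ) (hγ : 0 < γ) (l : ℕ)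
    (h2l : γ + (m : ℝ) < 2 * l) :
    ∃ C : ℝ, 0 < C ∧ ∀ μ : ℕ, 2 ≤ μ →
      (∫ t in Set.Ioo (0 : ℝ) π,
          (1 / ∫ s in Set.Ioo (0 : ℝ) π,
              (Real.sin (μ * s / 2) / Real.sin (s / 2)) ^ (2 * l) *
                ((Real.sin (s / 2)) ^ a * (Real.sin s) ^ b)) *
            ((Real.sin (μ * t / 2) / Real.sin (t / 2)) ^ (2 * l) *
              (t ^ γ * ((Real.sin (t / 2)) ^ a * (Real.sin t) ^ b))))
        ≤ C / (μ : ℝ) ^ γ := by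
  subst hm
  push_cast at h2l
  have he : 0 < γ + (a + b + 1) := by positivity
  set A := 1 / (γ + (a + b + 1)) + π ^ (2 * l) / (2 * l - (γ + (a + b + 1)))
  set K := (2 / π) ^ (2 * l) / (π ^ (a + b) * (a + b + 1))
  refine ⟨A / K, by positivity, fun μ hμ => ?_⟩
  have hμ1 : 1 ≤ μ := by omega
  have hμ0 : (0 : ℝ) < μ := by positivity
  change ∫ t in Ioo 0 π, (1 / ∫ s in Ioo 0 π, jacksonKernel μ l s * jacobiWeight a b s) *
    (jacksonKernel μ l t * (t ^ γ * jacobiWeight a b t)) ≤ _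
  rw [integral_const_mul, one_div, inv_mul_eq_div]
  calc _ ≤ A * ((μ : ℝ) ^ (2 * l) / (μ : ℝ) ^ (γ + (a + b + 1))) /
        (K * ((μ : ℝ) ^ (2 * l) / (μ : ℝ) ^ (a + b + 1))) :=
        div_le_div₀ (by positivity)
          (setIntegral_jacksonKernel_mul_rpow_mul_jacobiWeight_le hμ1 he h2l) (by positivity)
          (le_setIntegral_jacksonKernel_mul_jacobiWeight hμ1)
    _ = A / K / (μ : ℝ) ^ γ := by
        rw [rpow_add hμ0, ← Nat.cast_add, ← Nat.cast_add_one, rpow_natCast]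
        field_simp

/-- Let `γ > 0` and `l ≥ 1` with `2l > γ + m`, where `m = a + b + 1`.
Then there is a constant `C > 0` (depending only on `a`, `b`, `γ`, `l`) such that
for every integer `μ ≥ 2`,
`∫_0^π (1/k_{μ,l}) D_{μ,l}(t) t^γ α(t) dt ≤ C / μ^γ`, where
`α(t) = sin(t/2)^a (sin t)^b`, `D_{μ,l}(t) = (sin(μt/2)/sin(t/2))^(2l)` and
`k_{μ,l} = ∫_0^π D_{μ,l}(t) α(t) dt`. -/
theorem stmt_0 (a b : ℕ) (m : ℕ) (hm : m = a + b + 1)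
    (γ : ℝ) (hγ : 0 < γ) (l : ℕ) (hl : 1 ≤ l)
    (h2l : γ + (m : ℝ) < 2 * l) :
    ∃ C : ℝ, 0 < C ∧ ∀ μ : ℕ, 2 ≤ μ →
      (∫ t in Set.Ioo (0 : ℝ) π,
          (1 / ∫ s in Set.Ioo (0 : ℝ) π,
              (Real.sin (μ * s / 2) / Real.sin (s / 2)) ^ (2 * l) *
                ((Real.sin (s / 2)) ^ a * (Real.sin s) ^ b)) *
            ((Real.sin (μ * t / 2) / Real.sin (t / 2)) ^ (2 * l) *
              (t ^ γ * ((Real.sin (t / 2)) ^ a * (Real.sin t) ^ b))))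
        ≤ C / (μ : ℝ) ^ γ :=
  stmt_0_general a b m hm γ hγ l h2l
end

section
/- Let l be a positive integer. Then for every integer μ ≥ 2 one has k_{μ,l} ≥ (2^{2l+b} / (m π^{2l-1})) · μ^{2l-m}. -/
/-!
On `(0, π/μ)` Jordan's inequality `sin x ≥ 2x/π` (for `x ≤ π/2`) together with `sin x ≤ x`
gives `D_{μ,l}(t) ≥ (2μ/π)^{2l}` and `α(t) ≥ 2^b t^{a+b} / π^{a+b}`. Integrating this
polynomial lower bound over `(0, π/μ)` and dropping the rest of `(0, π)`, where the integrand
is nonnegative, yields the bound, with `μ^{2l-m}` coming from `(π/μ)^m`. Integrability of the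
integrand on `(0, π)` follows from `|sin (μx)| ≤ μ |sin x|`, which bounds it by `μ^{2l}`.
-/

open MeasureTheory Real Set

section Kernel

variable (μ l a b : ℕ)

lemma abs_sin_ratio_pow_mul_le (t : ℝ) :
    |(sin (μ * t / 2) / sin (t / 2)) ^ (2 * l) * (sin (t / 2) ^ a * sin t ^ b)|
      ≤ (μ : ℝ) ^ (2 * l) := by
  rw [abs_mul, abs_pow, abs_mul, abs_pow, abs_pow]
  have hratio : |sin (μ * t / 2) / sin (t / 2)| ≤ μ := by
    simpa only [mul_div_assoc] using abs_sin_nat_mul_div_sin_le μ (t / 2)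
  calc |sin (μ * t / 2) / sin (t / 2)| ^ (2 * l) * (|sin (t / 2)| ^ a * |sin t| ^ b)
      ≤ (μ : ℝ) ^ (2 * l) * (1 * 1) := by
        gcongr
        · exact pow_le_one₀ (abs_nonneg _) (abs_sin_le_one _)
        · exact pow_le_one₀ (abs_nonneg _) (abs_sin_le_one _)
    _ = (μ : ℝ) ^ (2 * l) := by ring

lemma integrableOn_sin_ratio_pow_mul {s : Set ℝ} (hs : volume s ≠ ⊤) :
    IntegrableOn (fun t ↦ (sin (μ * t / 2) / sin (t / 2)) ^ (2 * l) *
      (sin (t / 2) ^ a * sin t ^ b)) s :=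
  Measure.integrableOn_of_bounded (M := (μ : ℝ) ^ (2 * l)) hs
    (by fun_prop : Measurable _).aestronglyMeasurable
    (ae_of_all _ (abs_sin_ratio_pow_mul_le μ l a b))

lemma sin_ratio_pow_mul_nonneg {t : ℝ} (ht₀ : 0 ≤ t) (htπ : t ≤ π) :
    0 ≤ (sin (μ * t / 2) / sin (t / 2)) ^ (2 * l) * (sin (t / 2) ^ a * sin t ^ b) := by
  have h₁ : 0 ≤ sin (t / 2) := sin_nonneg_of_nonneg_of_le_pi (by linarith) (by linarith)
  have h₂ : 0 ≤ sin t := sin_nonneg_of_nonneg_of_le_pi ht₀ htπ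
  have h₃ := (even_two_mul l).pow_nonneg (sin (μ * t / 2) / sin (t / 2))
  positivity

end Kernel

lemma two_mul_div_pi_le_sin_mul_half_div_sin_half {μ t : ℝ} (hμ : 0 ≤ μ) (ht₀ : 0 < t)
    (htπ : t ≤ π) (hμt : μ * t ≤ π) : 2 * μ / π ≤ sin (μ * t / 2) / sin (t / 2) := by
  have hsin_pos : 0 < sin (t / 2) := sin_pos_of_pos_of_lt_pi (by linarith) (by linarith)
  rw [le_div_iff₀ hsin_pos]
  calc 2 * μ / π * sin (t / 2) ≤ 2 * μ / π * (t / 2) := by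
        gcongr
        exact sin_le (by linarith)
    _ = 2 / π * (μ * t / 2) := by ring
    _ ≤ sin (μ * t / 2) := mul_le_sin (by positivity) (by linarith)

lemma pow_mul_le_sin_half_pow_mul_sin_pow (a b : ℕ) {t : ℝ} (ht₀ : 0 ≤ t) (ht : t ≤ π / 2) :
    2 ^ b / π ^ (a + b) * t ^ (a + b) ≤ sin (t / 2) ^ a * sin t ^ b := by
  have h₁ : t / π ≤ sin (t / 2) := by
    calc t / π = 2 / π * (t / 2) := by field_simp
      _ ≤ sin (t / 2) := mul_le_sin (by linarith) (by linarith [pi_pos])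
  have h₂ : 2 * t / π ≤ sin t := by
    calc 2 * t / π = 2 / π * t := by ring
      _ ≤ sin t := mul_le_sin ht₀ ht
  have h₀ : 0 ≤ t / π := by positivity
  calc 2 ^ b / π ^ (a + b) * t ^ (a + b) = (t / π) ^ a * (2 * t / π) ^ b := by
        rw [div_pow, div_pow, mul_pow, pow_add, pow_add]
        field_simp
    _ ≤ sin (t / 2) ^ a * sin t ^ b := by
        gcongr
        exact pow_nonneg (h₀.trans h₁) _

lemma setIntegral_Ioo_zero_pow {c : ℝ} (hc : 0 ≤ c) (n : ℕ) :
    ∫ t in Ioo 0 c, t ^ n = c ^ (n + 1) / (n + 1) := by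
  rw [← integral_Ioc_eq_integral_Ioo, ← intervalIntegral.integral_of_le hc, integral_pow]
  simp

lemma setIntegral_le_setIntegral_of_le_on_subset {f g : ℝ → ℝ} {s u : Set ℝ}
    (hsu : s ⊆ u) (hs : MeasurableSet s) (hu : MeasurableSet u)
    (hg : IntegrableOn g s) (hf : IntegrableOn f u)
    (hgf : ∀ t ∈ s, g t ≤ f t) (hf_nonneg : ∀ t ∈ u, 0 ≤ f t) :
    ∫ t in s, g t ≤ ∫ t in u, f t :=
  (setIntegral_mono_on hg (hf.mono_set hsu) hs hgf).trans
    (setIntegral_mono_set hf (ae_restrict_of_forall_mem hu hf_nonneg) hsu.eventuallyLE)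

lemma minorant_integral_eq (a b l μ : ℕ) (hl : 1 ≤ l) (hμ : 0 < μ) :
    (2 * μ / π) ^ (2 * l) * (2 ^ b / π ^ (a + b)) * ((π / μ) ^ (a + b + 1) / (a + b + 1))
      = 2 ^ (2 * l + b) / ((a + b + 1 : ℕ) * π ^ (2 * l - 1)) *
          (μ : ℝ) ^ ((2 * l : ℤ) - (a + b + 1 : ℕ)) := by
  obtain ⟨k, rfl⟩ : ∃ k, l = k + 1 := ⟨l - 1, by omega⟩
  have hμ' : (μ : ℝ) ≠ 0 := by positivity
  rw [zpow_sub₀ hμ', show (2 * ((k + 1 : ℕ) : ℤ)) = ((2 * (k + 1) : ℕ) : ℤ) by push_cast; ring,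
    show 2 * (k + 1) - 1 = 2 * k + 1 by omega]
  simp only [zpow_natCast, div_pow]
  push_cast
  field_simp
  ring

/-- With `m = a + b + 1`, `α(t) = sin(t/2)^a (sin t)^b` and
`D_{μ,l}(t) = (sin(μt/2)/sin(t/2))^(2l)`, for every integer `μ ≥ 2` the normalizing
constant `k_{μ,l} = ∫_0^π D_{μ,l}(t) α(t) dt` satisfies
`k_{μ,l} ≥ (2^(2l+b) / (m π^(2l-1))) · μ^(2l-m)`. -/
theorem stmt_1 (a b : ℕ) (m : ℕ) (hm : m = a + b + 1) (l : ℕ) (hl : 1 ≤ l) :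
    ∀ μ : ℕ, 2 ≤ μ →
      (2 ^ (2 * l + b) / ((m : ℝ) * π ^ (2 * l - 1))) * (μ : ℝ) ^ ((2 * l : ℤ) - m)
        ≤ ∫ t in Set.Ioo (0 : ℝ) π,
            (Real.sin (μ * t / 2) / Real.sin (t / 2)) ^ (2 * l) *
              ((Real.sin (t / 2)) ^ a * (Real.sin t) ^ b) := by
  intro μ hμ
  subst hm
  have hμ₂ : (2 : ℝ) ≤ μ := by exact_mod_cast hμ
  have hc : π / μ ≤ π / 2 := div_le_div_of_nonneg_left pi_pos.le two_pos hμ₂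
  have hcπ : π / μ ≤ π := hc.trans (by linarith [pi_pos])
  set C := (2 * μ / π) ^ (2 * l) * (2 ^ b / π ^ (a + b))
  have hlower : ∀ t ∈ Ioo 0 (π / μ), C * t ^ (a + b) ≤
      (sin (μ * t / 2) / sin (t / 2)) ^ (2 * l) * (sin (t / 2) ^ a * sin t ^ b) := by
    rintro t ⟨ht₀, ht⟩
    have hμt : μ * t ≤ π := by rw [lt_div_iff₀ (by positivity)] at ht; linarith
    rw [mul_assoc]
    exact mul_le_mul
      (pow_le_pow_left₀ (by positivity) (two_mul_div_pi_le_sin_mul_half_div_sin_half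
        (by positivity) ht₀ (by linarith) hμt) _)
      (pow_mul_le_sin_half_pow_mul_sin_pow a b ht₀.le (by linarith))
      (by positivity) ((even_two_mul l).pow_nonneg _)
  calc _ = ∫ t in Ioo 0 (π / μ), C * t ^ (a + b) := by
        rw [integral_const_mul, setIntegral_Ioo_zero_pow (by positivity),
          ← minorant_integral_eq a b l μ hl (by omega)]
        push_cast
        ring
    _ ≤ _ := setIntegral_le_setIntegral_of_le_on_subset (Ioo_subset_Ioo_right hcπ)
        measurableSet_Ioo measurableSet_Ioo
        ((continuous_const.mul (continuous_pow _)).integrableOn_Icc.mono_set Ioo_subset_Icc_self)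
        (integrableOn_sin_ratio_pow_mul μ l a b measure_Ioo_lt_top.ne) hlower
        (fun t ht ↦ sin_ratio_pow_mul_nonneg μ l a b ht.1.le ht.2.le)
end

section
/- Let a and b be nonnegative integers and let l be a positive integer. Then for every integer μ ≥ 2 one has ∫_0^{π/2} t^{a+b-2l} (sin(μ t/2))^{2l} dt ≥ μ^{2l-a-b-1} · ∫_0^{π} u^{a+b-2l} (sin(u/2))^{2l} du. -/
/-!
The substitution `u = μ t` turns the left-hand integral into
`μ^(2l-a-b-1) ∫_0^{μπ/2} u^(a+b-2l) sin(u/2)^(2l) du`. The integrand is nonnegative, so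
enlarging the range from `(0, π)` to `(0, μπ/2) ⊇ (0, π)` (as `μ ≥ 2`) can only increase it.
-/

open MeasureTheory Real Set

theorem abs_zpow_mul_sin_half_pow_le {c : ℤ} {k : ℕ} {x : ℝ} (hx : 0 < x) :
    |x ^ c * sin (x / 2) ^ k| ≤ x ^ (c + k) := by
  have hsin : |sin (x / 2)| ≤ x :=
    abs_sin_le_abs.trans (by rw [abs_of_pos (half_pos hx)]; linarith)
  calc |x ^ c * sin (x / 2) ^ k| = x ^ c * |sin (x / 2)| ^ k := by
        rw [abs_mul, abs_pow, abs_of_pos (zpow_pos hx c)]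
    _ ≤ x ^ c * x ^ k := by gcongr
    _ = x ^ (c + k) := by rw [zpow_add₀ hx.ne', zpow_natCast]

theorem integrableOn_zpow_mul_sin_half_pow {c : ℤ} {k : ℕ} (hck : 0 ≤ c + k) (M : ℝ) :
    IntegrableOn (fun x : ℝ => x ^ c * sin (x / 2) ^ k) (Ioo 0 M) := by
  refine Measure.integrableOn_of_bounded (M := M ^ (c + k)) measure_Ioo_lt_top.ne
    (by fun_prop) ?_
  filter_upwards [ae_restrict_mem measurableSet_Ioo] with x ⟨hx0, hxM⟩
  exact (abs_zpow_mul_sin_half_pow_le hx0).trans (zpow_le_zpow_left₀ hck hx0.le hxM.le)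

theorem setIntegral_Ioo_comp_mul_left (f : ℝ → ℝ) {μ T : ℝ} (hμ : 0 < μ) (hT : 0 ≤ T) :
    ∫ t in Ioo 0 T, f (μ * t) = μ⁻¹ * ∫ u in Ioo 0 (μ * T), f u := by
  simp only [← integral_Ioc_eq_integral_Ioo, ← intervalIntegral.integral_of_le hT,
    ← intervalIntegral.integral_of_le (mul_nonneg hμ.le hT)]
  rw [intervalIntegral.integral_comp_mul_left f hμ.ne', mul_zero, smul_eq_mul]

/-- The weight `t ^ c` is homogeneous, so it contributes the factor `μ ^ (-c)` on top of the
Jacobian `μ⁻¹`. -/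
theorem setIntegral_Ioo_zpow_mul_comp_mul_left (f : ℝ → ℝ) (c : ℤ) {μ T : ℝ} (hμ : 0 < μ)
    (hT : 0 ≤ T) :
    ∫ t in Ioo 0 T, t ^ c * f (μ * t) = μ ^ (-c - 1) * ∫ u in Ioo 0 (μ * T), u ^ c * f u := by
  have hweight : ∀ t : ℝ, t ^ c * f (μ * t) = μ ^ (-c) * ((μ * t) ^ c * f (μ * t)) := by
    intro t
    rw [mul_zpow, zpow_neg, ← mul_assoc, ← mul_assoc, inv_mul_cancel₀ (zpow_ne_zero c hμ.ne'),
      one_mul]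
  simp_rw [hweight]
  rw [integral_const_mul, setIntegral_Ioo_comp_mul_left (fun u => u ^ c * f u) hμ hT,
    zpow_sub₀ hμ.ne', zpow_one, div_eq_mul_inv, mul_assoc]

theorem stmt_3_general (a b : ℕ) (l : ℕ) :
    ∀ μ : ℕ, 2 ≤ μ →
      (μ : ℝ) ^ ((2 * l : ℤ) - a - b - 1) *
          (∫ u in Set.Ioo (0 : ℝ) π,
            u ^ ((a : ℤ) + b - 2 * l) * (Real.sin (u / 2)) ^ (2 * l))
        ≤ ∫ t in Set.Ioo (0 : ℝ) (π / 2),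
            t ^ ((a : ℤ) + b - 2 * l) * (Real.sin (μ * t / 2)) ^ (2 * l) := by
  intro μ hμ
  set c : ℤ := (a : ℤ) + b - 2 * l
  have hμ0 : (0 : ℝ) < μ := by positivity
  have hπ : π ≤ μ * (π / 2) := by
    have : (2 : ℝ) ≤ μ := by exact_mod_cast hμ
    nlinarith [pi_pos]
  have hrange : ∫ u in Ioo 0 π, u ^ c * sin (u / 2) ^ (2 * l)
      ≤ ∫ u in Ioo 0 (μ * (π / 2)), u ^ c * sin (u / 2) ^ (2 * l) := by
    refine setIntegral_mono_set (integrableOn_zpow_mul_sin_half_pow (by omega) _) ?_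
      (Ioo_subset_Ioo_right hπ).eventuallyLE
    filter_upwards [ae_restrict_mem measurableSet_Ioo] with u hu
    exact mul_nonneg (zpow_nonneg hu.1.le c) ((even_two_mul l).pow_nonneg _)
  rw [setIntegral_Ioo_zpow_mul_comp_mul_left (fun u => sin (u / 2) ^ (2 * l)) c hμ0
    (by positivity), show (2 * l : ℤ) - a - b - 1 = -c - 1 by ring]
  exact mul_le_mul_of_nonneg_left hrange (by positivity)

/-- For nonnegative integers `a, b`, a positive integer `l` and
every integer `μ ≥ 2`,
`∫_0^{π/2} t^(a+b-2l) (sin(μt/2))^(2l) dt ≥ μ^(2l-a-b-1) · ∫_0^π u^(a+b-2l) (sin(u/2))^(2l) du`. -/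
theorem stmt_3 (a b : ℕ) (l : ℕ) (hl : 1 ≤ l) :
    ∀ μ : ℕ, 2 ≤ μ →
      (μ : ℝ) ^ ((2 * l : ℤ) - a - b - 1) *
          (∫ u in Set.Ioo (0 : ℝ) π,
            u ^ ((a : ℤ) + b - 2 * l) * (Real.sin (u / 2)) ^ (2 * l))
        ≤ ∫ t in Set.Ioo (0 : ℝ) (π / 2),
            t ^ ((a : ℤ) + b - 2 * l) * (Real.sin (μ * t / 2)) ^ (2 * l) :=
  stmt_3_general a b l
end
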